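/- For all basis elements e_{ij}, e_{ab} of L = (sl_{n+1}^+)_q (with 1 ≤ i < j ≤ n+1, 1 ≤ a < b ≤ n+1), the iterated q-bracket [[e_{ij}, e_{ab}]_q, e_{ab}]_q equals 0. -/
import Mathlib


open Finsupp TensorProduct

/-- Index pairs `1 ≤ i < j ≤ n+1`, modeled 0-based as pairs in `Fin (n+1)`. -/
abbrev Idx (n : ℕ) := {p : Fin (n + 1) × Fin (n + 1) // p.1 < p.2}

/-- The total order on index pairs: `e_{ab} < e_{ij}` iff `a+b < i+j`, or
(`a+b = i+j` and `b < j`). -/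
def idxLt {n : ℕ} (x y : Idx n) : Prop :=
  x.1.1.val + x.1.2.val < y.1.1.val + y.1.2.val ∨
    (x.1.1.val + x.1.2.val = y.1.1.val + y.1.2.val ∧ x.1.2.val < y.1.2.val)

instance {n : ℕ} : DecidableRel (idxLt (n := n)) := fun _ _ => by
  unfold idxLt; infer_instance

/-- The integer `c_{ab,ij} = δ_{ai} − δ_{aj} − δ_{bi} + δ_{bj}`. -/
def cc {n : ℕ} (x y : Idx n) : ℤ :=
  (if x.1.1 = y.1.1 then 1 else 0) - (if x.1.1 = y.1.2 then 1 else 0)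
    - (if x.1.2 = y.1.1 then 1 else 0) + (if x.1.2 = y.1.2 then 1 else 0)

variable (n : ℕ) (k : Type*) [CommRing k]

/-- The basis element `e_x` of the free module `L = (sl_{n+1}^+)_q`. -/
noncomputable def bas (x : Idx n) : Idx n →₀ k := Finsupp.single x 1

/-- The value `δ_{bi} e_{aj} − δ_{ja} e_{ib}` of the classical commutator of matrix
units, as an element of the free module. -/
noncomputable def qcomm (x y : Idx n) : Idx n →₀ k :=
  (if h : x.1.2 = y.1.1 then
      Finsupp.single ⟨(x.1.1, y.1.2), (x.2.trans_eq h).trans y.2⟩ (1 : k)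
    else 0)
  - (if h : y.1.2 = x.1.1 then
      Finsupp.single ⟨(y.1.1, x.1.2), (y.2.trans_eq h).trans x.2⟩ (1 : k)
    else 0)

variable (q : kˣ)

/-- The `q`-bracket `[e_x, e_y]_q` on basis elements. -/
noncomputable def br (x y : Idx n) : Idx n →₀ k :=
  if idxLt x y then qcomm n k x y
  else if x = y then 0
  else (-((q ^ cc y x : kˣ) : k)) • qcomm n k y x

/-- The scalar `q(x,y)`. -/
noncomputable def qs (x y : Idx n) : k :=
  if idxLt x y then ((q ^ cc x y : kˣ) : k)
  else if x = y then 1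
  else ((q ^ (-cc y x) : kˣ) : k)

/-- The `k`-bilinear extension of the `q`-bracket to `L = (sl_{n+1}^+)_q`. -/
noncomputable def brL : (Idx n →₀ k) →ₗ[k] (Idx n →₀ k) →ₗ[k] (Idx n →₀ k) :=
  Finsupp.lsum k fun x =>
    LinearMap.toSpanSingleton k ((Idx n →₀ k) →ₗ[k] (Idx n →₀ k))
      (Finsupp.lsum k fun y =>
        LinearMap.toSpanSingleton k (Idx n →₀ k) (br n k q x y))

lemma brL_single_bas {n : ℕ} {k : Type*} [CommRing k] (q : kˣ) (x y : Idx n)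
    (c : k) :
    brL n k q (Finsupp.single x c) (bas n k y) = c • br n k q x y := by
  simp [brL, bas, Finsupp.lsum_single, LinearMap.toSpanSingleton_apply]

lemma brL_bas_bas {n : ℕ} {k : Type*} [CommRing k] (q : kˣ) (x y : Idx n) :
    brL n k q (bas n k x) (bas n k y) = br n k q x y := by
  rw [bas, brL_single_bas, one_smul]

lemma br_zero {n : ℕ} {k : Type*} [CommRing k] (q : kˣ) (z y : Idx n)
    (h1 : z.1.2 ≠ y.1.1) (h2 : y.1.2 ≠ z.1.1) : br n k q z y = 0 := by
  have hz : qcomm n k z y = 0 := by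
    rw [qcomm, dif_neg h1, dif_neg h2, sub_zero]
  have hy : qcomm n k y z = 0 := by
    rw [qcomm, dif_neg h2, dif_neg h1, sub_zero]
  unfold br
  split_ifs <;> simp [hz, hy]

lemma brL_qcomm_left {n : ℕ} {k : Type*} [CommRing k] (q : kˣ) (x y : Idx n) :
    brL n k q (qcomm n k x y) (bas n k y) = 0 := by
  rw [qcomm, map_sub, LinearMap.sub_apply]
  have hy := y.2
  have hx := x.2
  rw [Fin.lt_def] at hy hx
  split_ifs with h1 h2 h2 <;>
    [skip; skip; skip; simp] <;>
    simp only [map_zero, LinearMap.zero_apply, sub_zero, zero_sub, neg_eq_zero,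
      brL_single_bas, one_smul]
  · exfalso; rw [Fin.ext_iff] at h1 h2; omega
  · apply br_zero <;> · simp only [ne_eq, Fin.ext_iff] at *; omega
  · apply br_zero <;> · simp only [ne_eq, Fin.ext_iff] at *; omega

lemma brL_qcomm_right {n : ℕ} {k : Type*} [CommRing k] (q : kˣ) (x y : Idx n) :
    brL n k q (qcomm n k y x) (bas n k y) = 0 := by
  rw [qcomm, map_sub, LinearMap.sub_apply]
  have hy := y.2
  have hx := x.2
  rw [Fin.lt_def] at hy hx
  split_ifs with h1 h2 h2 <;>
    [skip; skip; skip; simp] <;>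
    simp only [map_zero, LinearMap.zero_apply, sub_zero, zero_sub, neg_eq_zero,
      brL_single_bas, one_smul]
  · exfalso; rw [Fin.ext_iff] at h1 h2; omega
  · apply br_zero <;> · simp only [ne_eq, Fin.ext_iff] at *; omega
  · apply br_zero <;> · simp only [ne_eq, Fin.ext_iff] at *; omega

/-- For all basis elements `e_{ij}, e_{ab}` of `L = (sl_{n+1}^+)_q`, the iterated
`q`-bracket `[[e_{ij}, e_{ab}]_q, e_{ab}]_q` vanishes. -/
theorem stmt6 {n : ℕ} (hn : 1 ≤ n) {k : Type*} [CommRing k] (q : kˣ)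
    (ij ab : Idx n) :
    brL n k q (brL n k q (bas n k ij) (bas n k ab)) (bas n k ab) = 0 := by
  rw [brL_bas_bas, br]
  split_ifs with h1 h2
  · exact brL_qcomm_left q ij ab
  · simp
  · rw [map_smul, LinearMap.smul_apply, brL_qcomm_right q ij ab, smul_zero]
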